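/- arXiv:1203.0515 — 9 statements merged into one kernel-verified Lean document; each statement's English description precedes it below -/
import Mathlib

section
/- Let X be a densely defined closable operator on a Hilbert space H with domain D, and let S = (I + X̄X*)⁻¹ restricted to D (where X̄ denotes the closure of X and X* its adjoint). Then the range S(D) is dense in H. -/
/-!
If `v ⊥ S(H)`, put `ξ = S v`, so that `v = ξ + X̄ X* ξ`. Since `X*` is a formal adjoint of `X̄`
(the adjoint relation passes to the closure of the graph),
`0 = ⟪ξ, v⟫ = ‖ξ‖² + ‖X* ξ‖²`, whence `ξ = 0`, `X* ξ = 0` and `v = 0`. So `S` has dense range,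
and `S(D)` is dense because `S` is continuous and `D` is dense.
-/

local notation "⟪" x ", " y "⟫" => @inner ℂ _ _ x y

namespace LinearPMap

variable {𝕜 E F : Type*} [RCLike 𝕜]
  [NormedAddCommGroup E] [InnerProductSpace 𝕜 E] [NormedAddCommGroup F] [InnerProductSpace 𝕜 F]
  {S : F →ₗ.[𝕜] E} {T : E →ₗ.[𝕜] F}

theorem IsFormalAdjoint.closure (h : S.IsFormalAdjoint T) (hT : T.IsClosable) :
    S.IsFormalAdjoint T.closure := by
  intro a x
  have hx : ((x : E), T.closure x) ∈ T.graph.topologicalClosure :=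
    hT.graph_closure_eq_closure_graph ▸ T.closure.mem_graph x
  have hclosed : _root_.IsClosed {p : E × F | inner 𝕜 (S a) p.1 = inner 𝕜 (a : F) p.2} :=
    isClosed_eq (continuous_const.inner continuous_fst) (continuous_const.inner continuous_snd)
  refine closure_minimal (fun ⟨p₁, p₂⟩ hp => ?_) hclosed hx
  obtain ⟨y, rfl, rfl⟩ := T.mem_graph_iff.mp hp
  exact h a y

theorem IsFormalAdjoint.inner_add_apply_apply (h : S.IsFormalAdjoint T) (a : S.domain)
    (ha : (S a : E) ∈ T.domain) :
    inner 𝕜 (a : F) (a + T ⟨S a, ha⟩) = ((‖(a : F)‖ ^ 2 + ‖S a‖ ^ 2 : ℝ) : 𝕜) := by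
  rw [inner_add_right, ← h a ⟨S a, ha⟩, inner_self_eq_norm_sq_to_K, inner_self_eq_norm_sq_to_K]
  push_cast
  rfl

theorem IsFormalAdjoint.add_apply_apply_eq_zero (h : S.IsFormalAdjoint T) (a : S.domain)
    (ha : (S a : E) ∈ T.domain) (h0 : inner 𝕜 (a : F) (a + T ⟨S a, ha⟩) = 0) :
    (a : F) + T ⟨S a, ha⟩ = 0 := by
  rw [h.inner_add_apply_apply a ha, RCLike.ofReal_eq_zero] at h0
  have hSa : S a = 0 := by
    rw [← norm_eq_zero]; nlinarith [sq_nonneg ‖(a : F)‖, sq_nonneg ‖S a‖]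
  have ha0 : (a : F) = 0 := by
    rw [← norm_eq_zero]; nlinarith [sq_nonneg ‖(a : F)‖, sq_nonneg ‖S a‖]
  have hSa' : (⟨S a, ha⟩ : T.domain) = 0 := Subtype.ext hSa
  rw [hSa', map_zero, ha0, add_zero]

end LinearPMap

theorem ContinuousLinearMap.denseRange_of_inner_apply_eq_zero {𝕜 E F : Type*} [RCLike 𝕜]
    [NormedAddCommGroup E] [InnerProductSpace 𝕜 E] [NormedAddCommGroup F] [InnerProductSpace 𝕜 F]
    [CompleteSpace F] (A : E →L[𝕜] F) (h : ∀ v, (∀ x, inner 𝕜 (A x) v = 0) → v = 0) :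
    DenseRange A := by
  change Dense (A.range : Set F)
  rw [Submodule.dense_iff_topologicalClosure_eq_top, Submodule.topologicalClosure_eq_top_iff,
    Submodule.eq_bot_iff]
  exact fun v hv => h v fun x => (Submodule.mem_orthogonal _ v).mp hv (A x) ⟨x, rfl⟩

/-- If `X` is a densely defined closable operator with domain `D` and
`S = (I + X̄X*)⁻¹ ↾ D` (characterized by `(I + X̄X*)(Sη) = η`), then `S(D)` is dense in `H`. -/
theorem stmt_1 {H : Type*} [NormedAddCommGroup H] [InnerProductSpace ℂ H] [CompleteSpace H]
    (D : Submodule ℂ H) (hD : Dense (D : Set H))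
    (X : H →ₗ.[ℂ] H) (hdom : X.domain = D) (hcl : X.IsClosable)
    (S : H →L[ℂ] H)
    (hS : ∀ η : H, ∃ (h₁ : S η ∈ X.adjoint.domain)
        (h₂ : X.adjoint ⟨S η, h₁⟩ ∈ X.closure.domain),
        S η + X.closure ⟨X.adjoint ⟨S η, h₁⟩, h₂⟩ = η) :
    Dense (S '' (D : Set H)) := by
  have hX : X.adjoint.IsFormalAdjoint X.closure :=
    (X.adjoint_isFormalAdjoint (hdom ▸ hD)).closure hcl
  refine (S.denseRange_of_inner_apply_eq_zero fun v hv => ?_).dense_image S.continuous hD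
  obtain ⟨h₁, h₂, hv_eq⟩ := hS v
  have h_orth : ⟪S v, S v + X.closure ⟨X.adjoint ⟨S v, h₁⟩, h₂⟩⟫ = 0 := by
    rw [hv_eq]; exact hv v
  rw [← hv_eq]
  exact hX.add_apply_apply_eq_zero ⟨S v, h₁⟩ h₂ h_orth
end

section
/- Let X be a densely defined closable operator on a Hilbert space H with domain D, and let S = (I + X̄X*)⁻¹ restricted to D. Then S(D) is a core for X*, i.e., the closure of the restriction of X* to S(D) equals X*. -/
/-!
Work in the Hilbert space `F ⊕₂ E`, where the graph `G` of `X†` is closed. The map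
`A η = (Sη, X†Sη)` is bounded by the closed graph theorem, so `A(D)` is dense in `A(F) ⊆ G`.
If `(ψ, X†ψ) ∈ G` is orthogonal to `A(F)`, then moving `X†` across the inner product gives
`0 = ⟪Sη, ψ⟫ + ⟪X̄X†Sη, ψ⟫ = ⟪η, ψ⟫` for every `η`, so `ψ = 0`. Hence `A(F)` is dense in `G`.
-/

open LinearPMap
open scoped InnerProductSpace

namespace Submodule

variable {𝕜 E : Type*} [RCLike 𝕜] [NormedAddCommGroup E] [InnerProductSpace 𝕜 E] [CompleteSpace E]

theorem topologicalClosure_eq_of_orthogonal_inf_eq_bot {M G : Submodule 𝕜 E}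
    (hG : IsClosed (G : Set E)) (hMG : M ≤ G) (h : Mᗮ ⊓ G = ⊥) :
    M.topologicalClosure = G := by
  rw [← sup_orthogonal_inf_of_hasOrthogonalProjection (M.topologicalClosure_minimal hMG hG),
    orthogonal_closure, h, sup_bot_eq]

end Submodule

namespace LinearPMap

section ClosedGraph

variable {𝕜 E F G : Type*} [NontriviallyNormedField 𝕜]
  [NormedAddCommGroup E] [NormedSpace 𝕜 E] [NormedAddCommGroup F] [NormedSpace 𝕜 F]
  [NormedAddCommGroup G] [NormedSpace 𝕜 G]

def compOfMapsTo (T : F →ₗ.[𝕜] G) (S : E →ₗ[𝕜] F) (hS : ∀ x, S x ∈ T.domain) : E →ₗ[𝕜] G :=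
  T.toFun ∘ₗ S.codRestrict T.domain hS

theorem compOfMapsTo_apply (T : F →ₗ.[𝕜] G) (S : E →ₗ[𝕜] F) (hS : ∀ x, S x ∈ T.domain) (x : E) :
    T.compOfMapsTo S hS x = T ⟨S x, hS x⟩ :=
  rfl

theorem IsClosed.continuous_compOfMapsTo [CompleteSpace E] [CompleteSpace G] {T : F →ₗ.[𝕜] G}
    (hT : T.IsClosed) (S : E →L[𝕜] F) (hS : ∀ x, S x ∈ T.domain) :
    Continuous (T.compOfMapsTo (S : E →ₗ[𝕜] F) hS) := by
  refine LinearMap.continuous_of_isClosed_graph _ ?_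
  have hgraph : ((T.compOfMapsTo (S : E →ₗ[𝕜] F) hS).graph : Set (E × G)) =
      Prod.map S id ⁻¹' (T.graph : Set (F × G)) := by
    ext ⟨x, z⟩
    simp [mem_graph_iff, compOfMapsTo_apply, eq_comm, hS x]
  rw [hgraph]
  exact hT.preimage (S.continuous.prodMap continuous_id)

end ClosedGraph

variable {𝕜 E F : Type*} [RCLike 𝕜] [NormedAddCommGroup E] [InnerProductSpace 𝕜 E]
  [NormedAddCommGroup F] [InnerProductSpace 𝕜 F] [CompleteSpace E] {X : E →ₗ.[𝕜] F}

theorem adjoint_isFormalAdjoint_closure (hX : Dense (X.domain : Set E)) (hcl : X.IsClosable) :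
    X†.IsFormalAdjoint X.closure := by
  intro y a
  have hmem : ((a : E), X.closure a) ∈ _root_.closure (X.graph : Set (E × F)) := by
    rw [← X.graph.topologicalClosure_coe, hcl.graph_closure_eq_closure_graph]
    exact X.closure.mem_graph a
  refine Set.EqOn.closure (f := fun p : E × F => ⟪X† y, p.1⟫_𝕜) (g := fun p => ⟪(y : F), p.2⟫_𝕜)
    ?_ (by fun_prop) (by fun_prop) hmem
  rintro ⟨_, _⟩ hp
  obtain ⟨x, rfl, rfl⟩ := (mem_graph_iff X).mp hp
  exact adjoint_isFormalAdjoint hX y x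

theorem inner_add_inner_adjoint_eq (hX : Dense (X.domain : Set E)) (hcl : X.IsClosable)
    {u : X†.domain} (hu : X† u ∈ X.closure.domain) (ψ : X†.domain) :
    ⟪(u : F), ψ⟫_𝕜 + ⟪X† u, X† ψ⟫_𝕜 = ⟪(u : F) + X.closure ⟨X† u, hu⟩, ψ⟫_𝕜 := by
  rw [inner_add_left, ← inner_conj_symm (X† u),
    adjoint_isFormalAdjoint_closure hX hcl ψ ⟨X† u, hu⟩, inner_conj_symm]

theorem adjoint_graph_subset_closure_image [CompleteSpace F] (hX : Dense (X.domain : Set E))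
    (hcl : X.IsClosable)
    (S : F →L[𝕜] F) (h₁ : ∀ η, S η ∈ X†.domain)
    (h₂ : ∀ η, X† ⟨S η, h₁ η⟩ ∈ X.closure.domain)
    (h₃ : ∀ η, S η + X.closure ⟨X† ⟨S η, h₁ η⟩, h₂ η⟩ = η) {s : Set F} (hs : Dense s) :
    (X†.graph : Set (F × E)) ⊆ _root_.closure ((fun η => (S η, X† ⟨S η, h₁ η⟩)) '' s) := by
  let A : F →ₗ[𝕜] WithLp 2 (F × E) := (WithLp.linearEquiv 2 𝕜 (F × E)).symm.toLinearMap ∘ₗ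
    (S : F →ₗ[𝕜] F).prod (X†.compOfMapsTo (S : F →ₗ[𝕜] F) h₁)
  have hA : Continuous A := (WithLp.prod_continuous_toLp ..).comp
    (S.continuous.prodMk ((adjoint_isClosed hX).continuous_compOfMapsTo S h₁))
  let G := X†.graph.comap (WithLp.linearEquiv 2 𝕜 (F × E)).toLinearMap
  have hG : _root_.IsClosed (G : Set (WithLp 2 (F × E))) :=
    (adjoint_isClosed hX).preimage (WithLp.prod_continuous_ofLp ..)
  have hAG : LinearMap.range A ≤ G := by
    rintro _ ⟨η, rfl⟩
    exact X†.mem_graph ⟨S η, h₁ η⟩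
  have horth : (LinearMap.range A)ᗮ ⊓ G = ⊥ := by
    rw [Submodule.eq_bot_iff]
    rintro w ⟨hw, hwG⟩
    obtain ⟨ψ, hψ₁, hψ₂⟩ := (mem_graph_iff _).mp hwG
    have hψ : ∀ η, ⟪η, (ψ : F)⟫_𝕜 = 0 := by
      intro η
      rw [← h₃ η, ← inner_add_inner_adjoint_eq hX hcl (h₂ η)]
      simpa [hψ₁, hψ₂, A, compOfMapsTo_apply] using hw (A η) ⟨η, rfl⟩
    obtain rfl : ψ = 0 := Subtype.ext (inner_self_eq_zero.mp (hψ ψ))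
    rw [ZeroMemClass.coe_zero] at hψ₁
    rw [LinearPMap.map_zero] at hψ₂
    exact (WithLp.linearEquiv 2 𝕜 (F × E)).map_eq_zero_iff.mp (Prod.ext hψ₁.symm hψ₂.symm)
  intro p hp
  have hpA : WithLp.toLp 2 p ∈ _root_.closure (A '' s) := by
    refine closure_minimal (hA.range_subset_closure_image_dense hs) isClosed_closure ?_
    rw [← LinearMap.coe_range, ← Submodule.topologicalClosure_coe,
      Submodule.topologicalClosure_eq_of_orthogonal_inf_eq_bot hG hAG horth]
    exact hp
  refine map_mem_closure (WithLp.prod_continuous_ofLp ..) hpA ?_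
  rintro _ ⟨η, hη, rfl⟩
  exact ⟨η, hη, rfl⟩

end LinearPMap

/-- With `S = (I + X̄X*)⁻¹ ↾ D`, the subspace `S(D)` is a core for `X*`:
the graph of `X*` restricted to `S(D)` is dense in the graph of `X*`. -/
theorem stmt_2 {H : Type*} [NormedAddCommGroup H] [InnerProductSpace ℂ H] [CompleteSpace H]
    (D : Submodule ℂ H) (hD : Dense (D : Set H))
    (X : H →ₗ.[ℂ] H) (hdom : X.domain = D) (hcl : X.IsClosable)
    (S : H →L[ℂ] H)
    (hS : ∀ η : H, ∃ (h₁ : S η ∈ X.adjoint.domain)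
        (h₂ : X.adjoint ⟨S η, h₁⟩ ∈ X.closure.domain),
        S η + X.closure ⟨X.adjoint ⟨S η, h₁⟩, h₂⟩ = η) :
    ∀ ψ : X.adjoint.domain, ((ψ : H), X.adjoint ψ) ∈
      closure {p : H × H | ∃ ξ ∈ D, ∃ h : S ξ ∈ X.adjoint.domain,
        p = (S ξ, X.adjoint ⟨S ξ, h⟩)} := by
  intro ψ
  have hX : Dense (X.domain : Set H) := hdom ▸ hD
  choose h₁ h₂ h₃ using hS
  refine closure_mono ?_ (adjoint_graph_subset_closure_image hX hcl S h₁ h₂ h₃ hD (X†.mem_graph ψ))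
  rintro _ ⟨ξ, hξ, rfl⟩
  exact ⟨ξ, hξ, h₁ ξ, rfl⟩
end

section
/- Let A be a complex *-algebra with unit e, M a family of positive sesquilinear forms φ on A × A each satisfying invariance φ(ax, y) = φ(x, a*y) for all a, x, y ∈ A, and suppose M is sufficient: if φ(x,x) = 0 for all φ ∈ M then x = 0. Define q(x) = sup { φ(xa, xa)^{1/2} : φ ∈ M, a ∈ A, φ(a,a) = 1 }, and let D(q) be the set of x with q(x) < ∞. Then for x, y ∈ D(q), the product xy lies in D(q) and q(xy) ≤ q(x) q(y). -/
/-- `x` is `M`-bounded: there is `γ ≥ 0` with `φ(xa,xa) ≤ γ²φ(a,a)` for all `φ ∈ M`, `a ∈ A`. -/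
def MBdd {A : Type*} [Ring A] [Algebra ℂ A] [StarRing A]
    (M : Set (A → A → ℂ)) (x : A) : Prop :=
  ∃ γ : ℝ, 0 ≤ γ ∧ ∀ φ ∈ M, ∀ a : A, (φ (x * a) (x * a)).re ≤ γ ^ 2 * (φ a a).re

/-- `q(x)`: the least constant `γ` as above. -/
noncomputable def qM {A : Type*} [Ring A] [Algebra ℂ A] [StarRing A]
    (M : Set (A → A → ℂ)) (x : A) : ℝ :=
  sInf {γ : ℝ | 0 ≤ γ ∧ ∀ φ ∈ M, ∀ a : A, (φ (x * a) (x * a)).re ≤ γ ^ 2 * (φ a a).re}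

/-!
Every bound holds for `q(x)` itself, because the set of admissible constants `γ` is closed
(an intersection of sets `{γ | r ≤ γ² p}`). Applying the bound for `x` to `ya` and then the
bound for `y` to `a` gives `φ(xya, xya) ≤ q(x)² q(y)² φ(a, a)`.
-/

namespace MBdd

variable {A : Type*} (M : Set (A → A → ℂ))

/-- `qM M x` is by definition the infimum of this set. -/
def boundConstants [Mul A] (x : A) : Set ℝ :=
  {γ : ℝ | 0 ≤ γ ∧ ∀ φ ∈ M, ∀ a : A, (φ (x * a) (x * a)).re ≤ γ ^ 2 * (φ a a).re}

theorem isClosed_boundConstants [Mul A] (x : A) : IsClosed (boundConstants M x) := by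
  simp only [boundConstants, Set.ofPred_and, Set.ofPred_forall]
  exact (isClosed_le continuous_const continuous_id).inter <|
    isClosed_biInter fun φ _ ↦ isClosed_iInter fun a ↦
      isClosed_le continuous_const (by fun_prop)

theorem mul_mem_boundConstants [Semigroup A] {x y : A} {γ δ : ℝ}
    (hγ : γ ∈ boundConstants M x) (hδ : δ ∈ boundConstants M y) :
    γ * δ ∈ boundConstants M (x * y) := by
  refine ⟨mul_nonneg hγ.1 hδ.1, fun φ hφ a ↦ ?_⟩
  calc (φ (x * y * a) (x * y * a)).re
      = (φ (x * (y * a)) (x * (y * a))).re := by rw [mul_assoc]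
    _ ≤ γ ^ 2 * (φ (y * a) (y * a)).re := hγ.2 φ hφ (y * a)
    _ ≤ γ ^ 2 * (δ ^ 2 * (φ a a).re) := by gcongr; exact hδ.2 φ hφ a
    _ = (γ * δ) ^ 2 * (φ a a).re := by ring

variable [Ring A] [Algebra ℂ A] [StarRing A] {M}

theorem qM_mem_boundConstants {x : A} (hx : MBdd M x) : qM M x ∈ boundConstants M x :=
  (isClosed_boundConstants M x).csInf_mem hx ⟨0, fun _ hγ ↦ hγ.1⟩

end MBdd

open MBdd in
theorem stmt_5_general {A : Type*} [Ring A] [Algebra ℂ A] [StarRing A]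
    (M : Set (A → A → ℂ))
    (x y : A) (hx : MBdd M x) (hy : MBdd M y) :
    MBdd M (x * y) ∧ qM M (x * y) ≤ qM M x * qM M y := by
  have hxy := mul_mem_boundConstants M (qM_mem_boundConstants hx) (qM_mem_boundConstants hy)
  exact ⟨⟨_, hxy⟩, csInf_le ⟨0, fun _ hγ ↦ hγ.1⟩ hxy⟩

/-- For a sufficient family `M` of invariant positive sesquilinear forms on a
unital complex *-algebra, the `M`-bounded elements form a multiplicative set and
`q(xy) ≤ q(x)q(y)`. -/
theorem stmt_5 {A : Type*} [Ring A] [Algebra ℂ A] [StarRing A]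
    (M : Set (A → A → ℂ))
    (hadd₁ : ∀ φ ∈ M, ∀ x x' y : A, φ (x + x') y = φ x y + φ x' y)
    (hadd₂ : ∀ φ ∈ M, ∀ x y y' : A, φ x (y + y') = φ x y + φ x y')
    (hsmul₁ : ∀ φ ∈ M, ∀ (c : ℂ) (x y : A), φ (c • x) y = starRingEnd ℂ c * φ x y)
    (hsmul₂ : ∀ φ ∈ M, ∀ (c : ℂ) (x y : A), φ x (c • y) = c * φ x y)
    (hherm : ∀ φ ∈ M, ∀ x y : A, φ x y = starRingEnd ℂ (φ y x))
    (hpos : ∀ φ ∈ M, ∀ x : A, 0 ≤ (φ x x).re ∧ (φ x x).im = 0)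
    (hinv : ∀ φ ∈ M, ∀ a x y : A, φ (a * x) y = φ x (star a * y))
    (hsuff : ∀ x : A, (∀ φ ∈ M, φ x x = 0) → x = 0)
    (x y : A) (hx : MBdd M x) (hy : MBdd M y) :
    MBdd M (x * y) ∧ qM M (x * y) ≤ qM M x * qM M y :=
  stmt_5_general M x y hx hy
end

section
/- Let A be a unital complex *-algebra and M a sufficient family of invariant positive sesquilinear forms on A × A. If x ∈ A is M-bounded (i.e., there exists γ with φ(xa,xa) ≤ γ²φ(a,a) for all φ ∈ M, a ∈ A), then x* is M-bounded and q(x*) = q(x), where q(x) = sup{φ(xa,xa)^{1/2} : φ ∈ M, a ∈ A, φ(a,a) = 1}. -/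
/-!
For a single invariant form `φ`, write `t = φ(x*a, x*a)`. Invariance gives `t = φ(a, x x* a)`, so
Cauchy–Schwarz and the bound for `x` applied to `x* a` give
`t² ≤ φ(a,a) φ(x x* a, x x* a) ≤ γ² φ(a,a) t`, hence `t ≤ γ² φ(a,a)`.
Thus every bound for `x` is a bound for `x*` and, as `x** = x`, conversely; so the two sets whose
infima define `q(x)` and `q(x*)` coincide.
-/

section
variable {A : Type*} [Ring A] [Algebra ℂ A]

theorem norm_sq_le_re_mul_re_of_hermitian (φ : A → A → ℂ)
    (hadd : ∀ x x' y : A, φ (x + x') y = φ x y + φ x' y)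
    (hsmul : ∀ (c : ℂ) (x y : A), φ (c • x) y = starRingEnd ℂ c * φ x y)
    (hherm : ∀ x y : A, φ x y = starRingEnd ℂ (φ y x))
    (hpos : ∀ x : A, 0 ≤ (φ x x).re) (a b : A) :
    ‖φ a b‖ ^ 2 ≤ (φ a a).re * (φ b b).re := by
  let core : PreInnerProductSpace.Core ℂ A :=
    { inner := φ
      conj_inner_symm := fun x y => (hherm x y).symm
      re_inner_nonneg := hpos
      add_left := hadd
      smul_left := fun x y c => hsmul c x y }
  have cauchy_schwarz := InnerProductSpace.Core.inner_mul_inner_self_le (c := core) a b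
  rwa [InnerProductSpace.Core.norm_inner_symm b a, ← sq] at cauchy_schwarz

variable [StarRing A]

theorem re_apply_star_mul_le (φ : A → A → ℂ)
    (hadd : ∀ x x' y : A, φ (x + x') y = φ x y + φ x' y)
    (hsmul : ∀ (c : ℂ) (x y : A), φ (c • x) y = starRingEnd ℂ c * φ x y)
    (hherm : ∀ x y : A, φ x y = starRingEnd ℂ (φ y x))
    (hpos : ∀ x : A, 0 ≤ (φ x x).re)
    (hinv : ∀ a x y : A, φ (a * x) y = φ x (star a * y))
    {x : A} {γ : ℝ} (hx : ∀ a : A, (φ (x * a) (x * a)).re ≤ γ ^ 2 * (φ a a).re) (a : A) :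
    (φ (star x * a) (star x * a)).re ≤ γ ^ 2 * (φ a a).re := by
  set u := star x * a
  set t := (φ u u).re
  have ht : t = (φ a (x * u)).re := by
    change (φ (star x * a) u).re = _
    rw [hinv, star_star]
  have hbound : 0 ≤ γ ^ 2 * (φ a a).re := mul_nonneg (sq_nonneg γ) (hpos a)
  have ht_sq : t ^ 2 ≤ t * (γ ^ 2 * (φ a a).re) :=
    calc t ^ 2 ≤ ‖φ a (x * u)‖ ^ 2 := by
          rw [ht, sq, Complex.sq_norm]; exact Complex.re_sq_le_normSq _
      _ ≤ (φ a a).re * (φ (x * u) (x * u)).re :=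
          norm_sq_le_re_mul_re_of_hermitian φ hadd hsmul hherm hpos a (x * u)
      _ ≤ (φ a a).re * (γ ^ 2 * t) := mul_le_mul_of_nonneg_left (hx u) (hpos a)
      _ = t * (γ ^ 2 * (φ a a).re) := by ring
  nlinarith [hpos u, hbound]

end

theorem stmt_6_general {A : Type*} [Ring A] [Algebra ℂ A] [StarRing A]
    (M : Set (A → A → ℂ))
    (hadd₁ : ∀ φ ∈ M, ∀ x x' y : A, φ (x + x') y = φ x y + φ x' y)
    (hsmul₁ : ∀ φ ∈ M, ∀ (c : ℂ) (x y : A), φ (c • x) y = starRingEnd ℂ c * φ x y)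
    (hherm : ∀ φ ∈ M, ∀ x y : A, φ x y = starRingEnd ℂ (φ y x))
    (hpos : ∀ φ ∈ M, ∀ x : A, 0 ≤ (φ x x).re ∧ (φ x x).im = 0)
    (hinv : ∀ φ ∈ M, ∀ a x y : A, φ (a * x) y = φ x (star a * y))
    (x : A) (hx : MBdd M x) :
    MBdd M (star x) ∧ qM M (star x) = qM M x := by
  have bound_star {y : A} {γ : ℝ}
      (hy : ∀ φ ∈ M, ∀ a : A, (φ (y * a) (y * a)).re ≤ γ ^ 2 * (φ a a).re) :
      ∀ φ ∈ M, ∀ a : A, (φ (star y * a) (star y * a)).re ≤ γ ^ 2 * (φ a a).re :=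
    fun φ hφ => re_apply_star_mul_le φ (hadd₁ φ hφ) (hsmul₁ φ hφ) (hherm φ hφ)
      (fun z => (hpos φ hφ z).1) (hinv φ hφ) (hy φ hφ)
  obtain ⟨γ, hγ, h⟩ := hx
  refine ⟨⟨γ, hγ, bound_star h⟩, ?_⟩
  unfold qM
  congr 1
  ext δ
  refine and_congr_right fun _ => ⟨fun h => ?_, bound_star⟩
  simpa only [star_star] using bound_star h

/-- If `x` is `M`-bounded, so is `x*`, and `q(x*) = q(x)`. -/
theorem stmt_6 {A : Type*} [Ring A] [Algebra ℂ A] [StarRing A]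
    (M : Set (A → A → ℂ))
    (hadd₁ : ∀ φ ∈ M, ∀ x x' y : A, φ (x + x') y = φ x y + φ x' y)
    (hadd₂ : ∀ φ ∈ M, ∀ x y y' : A, φ x (y + y') = φ x y + φ x y')
    (hsmul₁ : ∀ φ ∈ M, ∀ (c : ℂ) (x y : A), φ (c • x) y = starRingEnd ℂ c * φ x y)
    (hsmul₂ : ∀ φ ∈ M, ∀ (c : ℂ) (x y : A), φ x (c • y) = c * φ x y)
    (hherm : ∀ φ ∈ M, ∀ x y : A, φ x y = starRingEnd ℂ (φ y x))
    (hpos : ∀ φ ∈ M, ∀ x : A, 0 ≤ (φ x x).re ∧ (φ x x).im = 0)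
    (hinv : ∀ φ ∈ M, ∀ a x y : A, φ (a * x) y = φ x (star a * y))
    (hsuff : ∀ x : A, (∀ φ ∈ M, φ x x = 0) → x = 0)
    (x : A) (hx : MBdd M x) :
    MBdd M (star x) ∧ qM M (star x) = qM M x :=
  stmt_6_general M hadd₁ hsmul₁ hherm hpos hinv x hx
end

section
/- Let A be a unital complex *-algebra, φ : A × A → ℂ a positive sesquilinear form with φ(ax,y) = φ(x,a*y) for all a,x,y ∈ A. Then for every a, b ∈ A and every n ∈ ℕ, the Kaplansky-like inequality holds: φ(ab, ab) ≤ φ(b,b)^{1 - 2^{-(n+1)}} · φ((a*a)^{2ⁿ} b, (a*a)^{2ⁿ} b)^{2^{-(n+1)}}. -/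
/-!
With `c = a⋆a`, invariance gives `φ(ab, ab) = φ(b, cb)` and `φ(c^m b, c^m b) = φ(b, c^{2m} b)`.
So `Y k = Re φ(b, c^{2^k} b)` satisfies `Y k ^ 2 ≤ φ(b, b) · Y (k + 1)` by Cauchy–Schwarz, and
taking square roots `n + 1` times along this chain starting from `Y 0 = φ(ab, ab)` yields the
exponents `1 - 2^{-(n+1)}` and `2^{-(n+1)}`.
-/

abbrev PreInnerProductSpace.Core.ofForm {A : Type*} [AddCommGroup A] [Module ℂ A] (φ : A → A → ℂ)
    (hadd : ∀ x x' y : A, φ (x + x') y = φ x y + φ x' y)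
    (hsmul : ∀ (c : ℂ) (x y : A), φ (c • x) y = starRingEnd ℂ c * φ x y)
    (hherm : ∀ x y : A, φ x y = starRingEnd ℂ (φ y x))
    (hpos : ∀ x : A, 0 ≤ (φ x x).re) : PreInnerProductSpace.Core ℂ A where
  inner := φ
  conj_inner_symm x y := (hherm x y).symm
  re_inner_nonneg := hpos
  add_left := hadd
  smul_left x y r := hsmul r x y

theorem sq_norm_le_re_mul_re {A : Type*} [AddCommGroup A] [Module ℂ A] (φ : A → A → ℂ)
    (hadd : ∀ x x' y : A, φ (x + x') y = φ x y + φ x' y)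
    (hsmul : ∀ (c : ℂ) (x y : A), φ (c • x) y = starRingEnd ℂ c * φ x y)
    (hherm : ∀ x y : A, φ x y = starRingEnd ℂ (φ y x))
    (hpos : ∀ x : A, 0 ≤ (φ x x).re) (x y : A) :
    ‖φ x y‖ ^ 2 ≤ (φ x x).re * (φ y y).re := by
  let := PreInnerProductSpace.Core.ofForm φ hadd hsmul hherm hpos
  have h : ‖φ x y‖ * ‖φ y x‖ ≤ (φ x x).re * (φ y y).re :=
    InnerProductSpace.Core.inner_mul_inner_self_le x y
  rwa [hherm y x, Complex.norm_conj, ← sq] at h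

theorem le_rpow_mul_rpow_of_sq_le_mul_succ {B : ℝ} (hB : 0 ≤ B) {Y : ℕ → ℝ}
    (hY : ∀ k, 0 ≤ Y k) (h : ∀ k, Y k ^ 2 ≤ B * Y (k + 1)) (n : ℕ) :
    Y 0 ≤ B ^ (1 - (2 : ℝ) ^ (-(n : ℝ))) * Y n ^ (2 : ℝ) ^ (-(n : ℝ)) := by
  induction n with
  | zero => simp
  | succ n ih =>
    set e : ℝ := (2 : ℝ) ^ (-(n : ℝ))
    have he1 : e ≤ 1 := Real.rpow_le_one_of_one_le_of_nonpos one_le_two (by simp)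
    have he : (2 : ℝ) ^ (-((n + 1 : ℕ) : ℝ)) = e / 2 := by
      rw [Nat.cast_succ, neg_add, Real.rpow_add two_pos, Real.rpow_neg_one, div_eq_mul_inv]
    have hstep : Y n ^ e ≤ B ^ (e / 2) * Y (n + 1) ^ (e / 2) := calc
      Y n ^ e = (Y n ^ 2) ^ (e / 2) := by
        rw [← Real.rpow_natCast, ← Real.rpow_mul (hY n)]; ring_nf
      _ ≤ (B * Y (n + 1)) ^ (e / 2) := by gcongr; exact h n
      _ = B ^ (e / 2) * Y (n + 1) ^ (e / 2) := Real.mul_rpow hB (hY _)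
    calc Y 0 ≤ B ^ (1 - e) * Y n ^ e := ih
      _ ≤ B ^ (1 - e) * (B ^ (e / 2) * Y (n + 1) ^ (e / 2)) := by gcongr
      _ = B ^ (1 - e / 2) * Y (n + 1) ^ (e / 2) := by
        rw [← mul_assoc, ← Real.rpow_add' hB (ne_of_gt (by linarith))]; ring_nf
      _ = _ := by rw [he]

theorem stmt_8_general {A : Type*} [Ring A] [Algebra ℂ A] [StarRing A]
    (φ : A → A → ℂ)
    (hadd₁ : ∀ x x' y : A, φ (x + x') y = φ x y + φ x' y)
    (hsmul₁ : ∀ (c : ℂ) (x y : A), φ (c • x) y = starRingEnd ℂ c * φ x y)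
    (hherm : ∀ x y : A, φ x y = starRingEnd ℂ (φ y x))
    (hpos : ∀ x : A, 0 ≤ (φ x x).re ∧ (φ x x).im = 0)
    (hinv : ∀ a x y : A, φ (a * x) y = φ x (star a * y)) :
    ∀ (a b : A) (n : ℕ),
      (φ (a * b) (a * b)).re ≤
        ((φ b b).re) ^ ((1 : ℝ) - (2 : ℝ) ^ (-((n : ℝ) + 1))) *
          ((φ ((star a * a) ^ (2 ^ n) * b) ((star a * a) ^ (2 ^ n) * b)).re)
            ^ ((2 : ℝ) ^ (-((n : ℝ) + 1))) := by
  intro a b n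
  set c := star a * a
  have hform (x : A) : φ (x * b) (x * b) = φ b (star x * x * b) := by rw [hinv, mul_assoc]
  have hsq (k : ℕ) : c ^ 2 ^ (k + 1) = star (c ^ 2 ^ k) * c ^ 2 ^ k := by
    rw [((IsSelfAdjoint.star_mul_self a).pow _).star_eq, ← pow_add, ← two_mul, pow_succ']
  set Y : ℕ → ℝ := fun k ↦ (φ b (c ^ 2 ^ k * b)).re
  have hY₀ : Y 0 = (φ (a * b) (a * b)).re := by simp [Y, c, hform]
  have hY_succ (k : ℕ) : Y (k + 1) = (φ (c ^ 2 ^ k * b) (c ^ 2 ^ k * b)).re := by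
    simp only [Y, hsq, hform]
  have hY_nonneg : ∀ k, 0 ≤ Y k
    | 0 => hY₀ ▸ (hpos _).1
    | k + 1 => hY_succ k ▸ (hpos _).1
  have hY_sq (k : ℕ) : Y k ^ 2 ≤ (φ b b).re * Y (k + 1) := calc
    Y k ^ 2 ≤ ‖φ b (c ^ 2 ^ k * b)‖ ^ 2 := by gcongr; exacts [hY_nonneg k, Complex.re_le_norm _]
    _ ≤ (φ b b).re * Y (k + 1) := by
      rw [hY_succ]; exact sq_norm_le_re_mul_re φ hadd₁ hsmul₁ hherm (fun x ↦ (hpos x).1) _ _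
  have := le_rpow_mul_rpow_of_sq_le_mul_succ (hpos b).1 hY_nonneg hY_sq (n + 1)
  rwa [hY₀, hY_succ, Nat.cast_succ] at this

/-- Kaplansky-like inequality: for an invariant positive sesquilinear form `φ`
on a unital complex *-algebra, for all `a, b` and `n`,
`φ(ab,ab) ≤ φ(b,b)^{1-2^{-(n+1)}} · φ((a*a)^{2ⁿ}b,(a*a)^{2ⁿ}b)^{2^{-(n+1)}}`. -/
theorem stmt_8 {A : Type*} [Ring A] [Algebra ℂ A] [StarRing A]
    (φ : A → A → ℂ)
    (hadd₁ : ∀ x x' y : A, φ (x + x') y = φ x y + φ x' y)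
    (hadd₂ : ∀ x y y' : A, φ x (y + y') = φ x y + φ x y')
    (hsmul₁ : ∀ (c : ℂ) (x y : A), φ (c • x) y = starRingEnd ℂ c * φ x y)
    (hsmul₂ : ∀ (c : ℂ) (x y : A), φ x (c • y) = c * φ x y)
    (hherm : ∀ x y : A, φ x y = starRingEnd ℂ (φ y x))
    (hpos : ∀ x : A, 0 ≤ (φ x x).re ∧ (φ x x).im = 0)
    (hinv : ∀ a x y : A, φ (a * x) y = φ x (star a * y)) :
    ∀ (a b : A) (n : ℕ),
      (φ (a * b) (a * b)).re ≤
        ((φ b b).re) ^ ((1 : ℝ) - (2 : ℝ) ^ (-((n : ℝ) + 1))) *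
          ((φ ((star a * a) ^ (2 ^ n) * b) ((star a * a) ^ (2 ^ n) * b)).re)
            ^ ((2 : ℝ) ^ (-((n : ℝ) + 1))) :=
  stmt_8_general φ hadd₁ hsmul₁ hherm hpos hinv
end

section
/- Let H be a Hilbert space and D ⊆ H dense. For X, Y ∈ L†(D,H), the weak product X □ Y is well-defined (i.e., Y(D) ⊆ D((X†)*) and X†(D) ⊆ D(Y*)) if and only if there exists Z ∈ L†(D,H) such that ⟨Yξ, X†η⟩ = ⟨Zξ, η⟩ for all ξ, η ∈ D; in that case Z = X □ Y := (X†)* Y restricted to D. -/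
local notation "⟪" x ", " y "⟫" => @inner ℂ _ _ x y

/-! A vector of `H` is determined by its inner products with the dense subspace `D`. Hence the
vectors `(X†)* (Y ξ)` and `Y* (X† η)`, when they exist, depend linearly on `ξ` and `η`, and are
the values of some `Z ∈ L†(D,H)` and of its adjoint on `D`; conversely such a `Z` provides them. -/

section DenseInner

variable {H M E : Type*} [NormedAddCommGroup H] [InnerProductSpace ℂ H]
  [AddCommGroup M] [Module ℂ M] [NormedAddCommGroup E] [InnerProductSpace ℂ E]
  {D : Submodule ℂ H}

theorem Dense.isLinearMap_of_inner_left_eq (hD : Dense (D : Set H)) (L : M →ₗ[ℂ] E)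
    (T : D → E) {f : M → H} (hf : ∀ x (η : D), ⟪f x, (η : H)⟫ = ⟪L x, T η⟫) :
    IsLinearMap ℂ f where
  map_add x y := hD.denseRange_val.eq_of_inner_left ℂ fun η => by
    rw [hf, map_add, inner_add_left, inner_add_left, hf, hf]
  map_smul c x := hD.denseRange_val.eq_of_inner_left ℂ fun η => by
    rw [hf, map_smul, inner_smul_left, inner_smul_left, hf]

theorem Dense.isLinearMap_of_inner_right_eq (hD : Dense (D : Set H)) (L : M →ₗ[ℂ] E)
    (T : D → E) {f : M → H} (hf : ∀ (ξ : D) x, ⟪(ξ : H), f x⟫ = ⟪T ξ, L x⟫) :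
    IsLinearMap ℂ f :=
  hD.isLinearMap_of_inner_left_eq L T fun x η => by
    rw [← inner_conj_symm, hf, inner_conj_symm]

end DenseInner

theorem stmt_12_general {H : Type*} [NormedAddCommGroup H] [InnerProductSpace ℂ H]
    (D : Submodule ℂ H) (hD : Dense (D : Set H))
    (Xd Y : ↥D →ₗ[ℂ] H) :
    (((∀ ξ : D, ∃ v : H, ∀ η : D, ⟪Y ξ, Xd η⟫ = ⟪v, (η : H)⟫) ∧
        (∀ η : D, ∃ w : H, ∀ ξ : D, ⟪Y ξ, Xd η⟫ = ⟪(ξ : H), w⟫)) ↔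
      (∃ Z Zd : ↥D →ₗ[ℂ] H, (∀ ξ η : D, ⟪Z ξ, (η : H)⟫ = ⟪(ξ : H), Zd η⟫) ∧
        ∀ ξ η : D, ⟪Y ξ, Xd η⟫ = ⟪Z ξ, (η : H)⟫)) ∧
    -- in that case `Z ξ` is the value of `(X†)* (Y ξ)`
    (∀ Z : ↥D →ₗ[ℂ] H, (∀ ξ η : D, ⟪Y ξ, Xd η⟫ = ⟪Z ξ, (η : H)⟫) →
      ∀ (ξ : D) (v : H), (∀ η : D, ⟪Y ξ, Xd η⟫ = ⟪v, (η : H)⟫) → Z ξ = v) := by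
  refine ⟨⟨fun ⟨hv, hw⟩ => ?_, fun ⟨Z, Zd, hZZd, hZ⟩ => ?_⟩, fun Z hZ ξ v hv => ?_⟩
  · choose v hv using hv
    choose w hw using hw
    let Z := (hD.isLinearMap_of_inner_left_eq Y Xd fun ξ η => (hv ξ η).symm).mk' v
    let Zd := (hD.isLinearMap_of_inner_right_eq Xd Y fun ξ η => (hw η ξ).symm).mk' w
    exact ⟨Z, Zd, fun ξ η => (hv ξ η).symm.trans (hw η ξ), hv⟩
  · exact ⟨fun ξ => ⟨Z ξ, hZ ξ⟩, fun η => ⟨Zd η, fun ξ => (hZ ξ η).trans (hZZd ξ η)⟩⟩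
  · exact hD.denseRange_val.eq_of_inner_left ℂ fun η => (hZ ξ η).symm.trans (hv η)

/-- For `X, Y ∈ L†(D,H)` (encoded by linear maps `X, Y : D → H` with
adjoint witnesses `Xd, Yd` on `D`), the weak product `X □ Y` is well-defined
(`Y(D) ⊆ D((X†)*)` and `X†(D) ⊆ D(Y*)`) iff there is `Z ∈ L†(D,H)` with
`⟨Yξ, X†η⟩ = ⟨Zξ, η⟩` for all `ξ, η ∈ D`; moreover such `Z` is unique and equals
`(X†)*Y ↾ D`. -/
theorem stmt_12 {H : Type*} [NormedAddCommGroup H] [InnerProductSpace ℂ H] [CompleteSpace H]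
    (D : Submodule ℂ H) (hD : Dense (D : Set H))
    (X Xd Y Yd : ↥D →ₗ[ℂ] H)
    (hX : ∀ ξ η : D, ⟪X ξ, (η : H)⟫ = ⟪(ξ : H), Xd η⟫)
    (hY : ∀ ξ η : D, ⟪Y ξ, (η : H)⟫ = ⟪(ξ : H), Yd η⟫) :
    (((∀ ξ : D, ∃ v : H, ∀ η : D, ⟪Y ξ, Xd η⟫ = ⟪v, (η : H)⟫) ∧
        (∀ η : D, ∃ w : H, ∀ ξ : D, ⟪Y ξ, Xd η⟫ = ⟪(ξ : H), w⟫)) ↔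
      (∃ Z Zd : ↥D →ₗ[ℂ] H, (∀ ξ η : D, ⟪Z ξ, (η : H)⟫ = ⟪(ξ : H), Zd η⟫) ∧
        ∀ ξ η : D, ⟪Y ξ, Xd η⟫ = ⟪Z ξ, (η : H)⟫)) ∧
    -- in that case `Z ξ` is the value of `(X†)* (Y ξ)`
    (∀ Z : ↥D →ₗ[ℂ] H, (∀ ξ η : D, ⟪Y ξ, Xd η⟫ = ⟪Z ξ, (η : H)⟫) →
      ∀ (ξ : D) (v : H), (∀ η : D, ⟪Y ξ, Xd η⟫ = ⟪v, (η : H)⟫) → Z ξ = v) :=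
  stmt_12_general D hD Xd Y
end

section
/- Let H be a Hilbert space, D ⊆ H dense, and X, Y ∈ L†(D,H). Suppose there exists a net {B_α} of bounded operators in L†(D,H) mapping D into D such that B_α ξ → Yξ for every ξ ∈ D, and there exists Z ∈ L†(D,H) such that ⟨B_α ξ, X†η⟩ → ⟨Zξ, η⟩ for all ξ, η ∈ D. Then X □ Y is well-defined and X □ Y = Z. -/
open Filter

local notation "⟪" x ", " y "⟫" => @inner ℂ _ _ x y

theorem stmt_14_general {H : Type*} [NormedAddCommGroup H] [InnerProductSpace ℂ H]
    {ι : Type*} [Nonempty ι] [SemilatticeSup ι]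
    (D : Submodule ℂ H)
    (Xd Y Z : ↥D →ₗ[ℂ] H)
    (B : ι → (↥D →ₗ[ℂ] H))
    (hconv : ∀ ξ : D, Tendsto (fun i => B i ξ) atTop (nhds (Y ξ)))
    (hweak : ∀ ξ η : D, Tendsto (fun i => ⟪B i ξ, Xd η⟫) atTop (nhds ⟪Z ξ, (η : H)⟫)) :
    ∀ ξ η : D, ⟪Y ξ, Xd η⟫ = ⟪Z ξ, (η : H)⟫ := fun ξ η =>
  tendsto_nhds_unique ((hconv ξ).inner tendsto_const_nhds) (hweak ξ η)

/-- If a net `{B_α}` of bounded operators mapping `D` into `D` converges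
strongly to `Y` and `⟨B_α ξ, X†η⟩ → ⟨Zξ, η⟩` for some `Z ∈ L†(D,H)`, then `X □ Y` is
well-defined and `X □ Y = Z`, i.e. `⟨Yξ, X†η⟩ = ⟨Zξ, η⟩` for all `ξ, η ∈ D`. -/
theorem stmt_14 {H : Type*} [NormedAddCommGroup H] [InnerProductSpace ℂ H] [CompleteSpace H]
    {ι : Type*} [Nonempty ι] [SemilatticeSup ι]
    (D : Submodule ℂ H) (hD : Dense (D : Set H))
    (X Xd Y Yd Z Zd : ↥D →ₗ[ℂ] H)
    (hX : ∀ ξ η : D, ⟪X ξ, (η : H)⟫ = ⟪(ξ : H), Xd η⟫)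
    (hY : ∀ ξ η : D, ⟪Y ξ, (η : H)⟫ = ⟪(ξ : H), Yd η⟫)
    (hZ : ∀ ξ η : D, ⟪Z ξ, (η : H)⟫ = ⟪(ξ : H), Zd η⟫)
    (B : ι → (↥D →ₗ[ℂ] H))
    (hBbdd : ∀ i : ι, ∃ C : ℝ, ∀ ξ : D, ‖B i ξ‖ ≤ C * ‖(ξ : H)‖)
    (hBD : ∀ (i : ι) (ξ : D), B i ξ ∈ D)
    (hconv : ∀ ξ : D, Tendsto (fun i => B i ξ) atTop (nhds (Y ξ)))
    (hweak : ∀ ξ η : D, Tendsto (fun i => ⟪B i ξ, Xd η⟫) atTop (nhds ⟪Z ξ, (η : H)⟫)) :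
    ∀ ξ η : D, ⟪Y ξ, Xd η⟫ = ⟪Z ξ, (η : H)⟫ :=
  stmt_14_general D Xd Y Z B hconv hweak
end

section
/- Let A be a unital Banach *-algebra (or more generally a unital normed *-algebra whose bounded part is a C*-algebra with norm q) and x an element such that the resolvent map λ ↦ (x − λe)⁻¹ exists in D(q) and is q-analytic for |λ| > r, with q-convergent Laurent expansion (x − λe)⁻¹ = Σ_{k≥1} a_k λ^{−k}. Then the Laurent coefficients satisfy x a_k = a_{k+1} for all k ≥ 1 and x a_1 = −x; consequently x = −a_2 ∈ D(q). In particular, an element with finite spectral radius relative to D(q) belongs to D(q). -/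
/-!
Fix `μ` with `r < ‖μ‖` and put `R = res μ`. Pulled back to `B` along the injective `ι`, the
resolvent identity reads `res z - R = (z - μ) • (R * res z)`. Substituting the Laurent series
gives a series `∑ z^{-(k+1)} b_k` that is constant for large `‖z‖`; such a series has vanishing
constant and coefficients (its sum is `O(1/‖z‖)`), whence `R * a 0 = -R` and
`R * (a (k+1) - μ • a k) = a k`. The comparison has to happen in `B`, since `ι` need not be
continuous. Multiplying by `x - μ` in `A` turns these into `ι (a 0) = -1` and
`x * ι (a k) = ι (a (k+1))`, and the case `k = 0` gives `x = -ι (a 1)`.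
-/

open Filter Topology

section InvPowSeries

variable {E : Type*}

theorem HasSum.inv_pow_smul_shift {𝕜 : Type*} [Field 𝕜] [AddCommGroup E] [Module 𝕜 E]
    [TopologicalSpace E] [IsTopologicalAddGroup E] [ContinuousConstSMul 𝕜 E]
    {b : ℕ → E} {c : E} {z : 𝕜} (hz : z ≠ 0)
    (h : HasSum (fun k => (z ^ (k + 1))⁻¹ • b k) c) :
    HasSum (fun k => (z ^ (k + 1))⁻¹ • b (k + 1)) (z • c - b 0) := by
  have h' := ((hasSum_nat_add_iff' 1).mpr h).const_smul z
  convert h' using 1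
  · ext k
    rw [smul_smul, pow_succ' z (k + 1), mul_inv, ← mul_assoc, mul_inv_cancel₀ hz, one_mul]
  · simp [smul_sub, smul_smul, hz]

variable [NormedAddCommGroup E] [NormedSpace ℂ E]

theorem HasSum.norm_le_of_inv_pow_smul_bounded {b : ℕ → E} {c : E} {z₀ z : ℂ} {M : ℝ}
    (hz₀ : z₀ ≠ 0) (hM : ∀ k, ‖(z₀ ^ (k + 1))⁻¹ • b k‖ ≤ M) (hlt : ‖z₀‖ < ‖z‖)
    (h : HasSum (fun k => (z ^ (k + 1))⁻¹ • b k) c) :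
    ‖c‖ ≤ M * (‖z₀‖ / ‖z‖) * (1 - ‖z₀‖ / ‖z‖)⁻¹ := by
  have hz : z ≠ 0 := norm_pos_iff.mp ((norm_nonneg _).trans_lt hlt)
  set q := ‖z₀‖ / ‖z‖
  have hq : q < 1 := (div_lt_one (by positivity)).mpr hlt
  refine h.norm_le_of_bounded ((hasSum_geometric_of_lt_one (by positivity) hq).mul_left (M * q))
    fun k => ?_
  have hterm : (z ^ (k + 1))⁻¹ • b k = (z₀ / z) ^ (k + 1) • ((z₀ ^ (k + 1))⁻¹ • b k) := by
    rw [smul_smul, div_pow, div_mul_eq_mul_div, mul_inv_cancel₀ (pow_ne_zero _ hz₀), one_div]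
  rw [hterm, norm_smul, norm_pow, norm_div, pow_succ', mul_comm, mul_assoc]
  exact mul_le_mul_of_nonneg_right (hM k) (by positivity) |>.trans_eq (by ring)

theorem eq_zero_of_forall_hasSum_inv_pow_smul {b : ℕ → E} {c : E} {r : ℝ}
    (h : ∀ z : ℂ, r < ‖z‖ → HasSum (fun k => (z ^ (k + 1))⁻¹ • b k) c) : c = 0 := by
  set s : ℝ := max r 0 + 1
  have hs : 0 < s := by positivity
  have norm_ofReal {t : ℝ} (ht : s ≤ t) : ‖(t : ℂ)‖ = t := by
    rw [Complex.norm_real, Real.norm_of_nonneg (hs.le.trans ht)]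
  have hrs : r < s := by linarith [le_max_left r 0]
  obtain ⟨M, hM⟩ :=
    (h s (by rwa [norm_ofReal le_rfl])).summable.tendsto_atTop_zero.norm.bddAbove_range
  have hq : Tendsto (fun t : ℝ => s / t) atTop (𝓝 0) := tendsto_const_nhds.div_atTop tendsto_id
  have hlim : Tendsto (fun t : ℝ => M * (s / t) * (1 - s / t)⁻¹) atTop (𝓝 0) := by
    simpa using (tendsto_const_nhds.mul hq).mul ((tendsto_const_nhds.sub hq).inv₀ (by simp))
  have hbound : ∀ᶠ t : ℝ in atTop, ‖c‖ ≤ M * (s / t) * (1 - s / t)⁻¹ := by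
    filter_upwards [eventually_gt_atTop s] with t ht
    have hst : ‖(s : ℂ)‖ < ‖(t : ℂ)‖ := by rwa [norm_ofReal le_rfl, norm_ofReal ht.le]
    simpa only [norm_ofReal le_rfl, norm_ofReal ht.le] using
      (h t (hrs.trans (by rwa [norm_ofReal ht.le]))).norm_le_of_inv_pow_smul_bounded
        (Complex.ofReal_ne_zero.mpr hs.ne') (fun k => hM ⟨k, rfl⟩) hst
  exact norm_le_zero_iff.mp (ge_of_tendsto hlim hbound)

theorem coeff_eq_zero_of_forall_hasSum_inv_pow_smul {b : ℕ → E} {c : E} {r : ℝ}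
    (h : ∀ z : ℂ, r < ‖z‖ → HasSum (fun k => (z ^ (k + 1))⁻¹ • b k) c) : b = 0 := by
  funext k
  induction k generalizing b c r with
  | zero => ?_
  | succ k ih => ?_
  all_goals
    obtain rfl := eq_zero_of_forall_hasSum_inv_pow_smul h
    have hshift : ∀ z : ℂ, max r 0 < ‖z‖ →
        HasSum (fun k => (z ^ (k + 1))⁻¹ • b (k + 1)) (-b 0) := fun z hz => by
      simpa using (h z ((le_max_left r 0).trans_lt hz)).inv_pow_smul_shift
        (norm_pos_iff.mp ((le_max_right r 0).trans_lt hz))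
  · simpa using eq_zero_of_forall_hasSum_inv_pow_smul hshift
  · exact ih hshift

end InvPowSeries

theorem laurent_coeff_relations {B : Type*} [NormedRing B] [NormedAlgebra ℂ B]
    {res : ℂ → B} {a : ℕ → B} {r : ℝ} {μ : ℂ}
    (hresolvent : ∀ z : ℂ, r < ‖z‖ → res z - res μ = (z - μ) • (res μ * res z))
    (hLaurent : ∀ z : ℂ, r < ‖z‖ → HasSum (fun k => (z ^ (k + 1))⁻¹ • a k) (res z)) :
    res μ * a 0 = -res μ ∧ ∀ k, res μ * (a (k + 1) - μ • a k) = a k := by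
  set R := res μ
  have key : ∀ z : ℂ, max r 0 < ‖z‖ → HasSum
      (fun k => (z ^ (k + 1))⁻¹ • (R * (a (k + 1) - μ • a k) - a k)) (-(R + R * a 0)) := by
    intro z hz
    have hzr : r < ‖z‖ := (le_max_left r 0).trans_lt hz
    have hR : HasSum (fun k => (z ^ (k + 1))⁻¹ • (R * a k)) (R * res z) := by
      simpa only [mul_smul_comm] using (hLaurent z hzr).mul_left R
    have := ((hR.inv_pow_smul_shift (norm_pos_iff.mp ((le_max_right r 0).trans_lt hz))).sub
      (hR.const_smul μ)).sub (hLaurent z hzr)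
    have hval : z • (R * res z) - R * a 0 - μ • (R * res z) - res z = -(R + R * a 0) := by
      linear_combination (norm := module) (-1 : ℂ) • hresolvent z hzr
    rw [hval] at this
    refine this.congr_fun fun k => ?_
    rw [mul_sub, mul_smul_comm]
    module
  refine ⟨eq_neg_of_add_eq_zero_right (neg_eq_zero.mp (eq_zero_of_forall_hasSum_inv_pow_smul key)),
    fun k => sub_eq_zero.mp (congrFun (coeff_eq_zero_of_forall_hasSum_inv_pow_smul key) k)⟩

-- `a k` is the paper's `a_{k+1}`.
theorem stmt_17_general {A : Type*} [NormedRing A] [NormedAlgebra ℂ A]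
    {B : Type*} [NormedRing B] [NormedAlgebra ℂ B]
    (ι : B →ₐ[ℂ] A) (hι : Function.Injective ι)
    (x : A) (r : ℝ) (res : ℂ → B) (a : ℕ → B)
    (hres : ∀ lam : ℂ, r < ‖lam‖ →
      (x - algebraMap ℂ A lam) * ι (res lam) = 1 ∧
      ι (res lam) * (x - algebraMap ℂ A lam) = 1)
    (hLaurent : ∀ lam : ℂ, r < ‖lam‖ →
      HasSum (fun k : ℕ => (lam ^ (k + 1))⁻¹ • a k) (res lam)) :
    (∀ k : ℕ, x * ι (a k) = ι (a (k + 1))) ∧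
    x * ι (a 0) = -x ∧
    x = -ι (a 1) ∧
    x ∈ Set.range ι := by
  obtain ⟨μ, hμ⟩ : ∃ μ : ℂ, r < ‖μ‖ := ⟨((|r| + 1 : ℝ) : ℂ), by
    rw [Complex.norm_real, Real.norm_of_nonneg (by positivity)]; linarith [le_abs_self r]⟩
  set y := x - algebraMap ℂ A μ
  have hresolvent (z : ℂ) (hz : r < ‖z‖) : res z - res μ = (z - μ) • (res μ * res z) := by
    apply hι
    calc ι (res z - res μ)
        = ι (res μ) * (x - algebraMap ℂ A μ) * ι (res z)
          - ι (res μ) * ((x - algebraMap ℂ A z) * ι (res z)) := by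
          rw [map_sub, (hres μ hμ).2, (hres z hz).1, one_mul, mul_one]
      _ = ι ((z - μ) • (res μ * res z)) := by
          simp only [map_smul, map_mul, Algebra.algebraMap_eq_smul_one, mul_sub, sub_mul,
            smul_mul_assoc, mul_smul_comm, one_mul, mul_one, mul_assoc]
          module
  obtain ⟨ha₀, hrec⟩ := laurent_coeff_relations hresolvent hLaurent
  have hinv {w u : B} (h : res μ * w = u) : ι w = y * ι u := by
    rw [← one_mul (ι w), ← (hres μ hμ).1, mul_assoc, ← map_mul, h]
  have hι_a₀ : ι (a 0) = -1 := by
    rw [hinv ha₀, map_neg, mul_neg, (hres μ hμ).1]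
  have hmul (k : ℕ) : x * ι (a k) = ι (a (k + 1)) := by
    have := hinv (hrec k)
    rw [map_sub, map_smul, sub_mul, ← Algebra.smul_def] at this
    exact (sub_left_inj.mp this).symm
  have hx : x = -ι (a 1) := by
    simpa [hι_a₀, neg_eq_iff_eq_neg] using hmul 0
  exact ⟨hmul, by rw [hι_a₀, mul_neg_one], hx, -a 1, by rw [map_neg, hx]⟩

/-- Let `A` be a unital normed *-algebra whose bounded part `D(q)` is a
C*-algebra `B` (embedded by `ι : B → A`). If for `|λ| > r` the resolvent `(x - λe)⁻¹`
exists in `D(q)` with `q`-convergent Laurent expansion `(x - λe)⁻¹ = Σ_{k≥1} a_k λ^{-k}`,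
then `x a_k = a_{k+1}`, `x a_1 = -x`, and consequently `x = -a_2 ∈ D(q)`.
(Here `a k` denotes the paper's `a_{k+1}`.) -/
theorem stmt_17 {A : Type*} [NormedRing A] [NormedAlgebra ℂ A] [StarRing A]
    {B : Type*} [NormedRing B] [NormedAlgebra ℂ B] [CompleteSpace B]
    [StarRing B] [CStarRing B]
    (ι : B →ₐ[ℂ] A) (hι : Function.Injective ι)
    (x : A) (r : ℝ) (res : ℂ → B) (a : ℕ → B)
    (hres : ∀ lam : ℂ, r < ‖lam‖ →
      (x - algebraMap ℂ A lam) * ι (res lam) = 1 ∧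
      ι (res lam) * (x - algebraMap ℂ A lam) = 1)
    (hLaurent : ∀ lam : ℂ, r < ‖lam‖ →
      HasSum (fun k : ℕ => (lam ^ (k + 1))⁻¹ • a k) (res lam)) :
    (∀ k : ℕ, x * ι (a k) = ι (a (k + 1))) ∧
    x * ι (a 0) = -x ∧
    x = -ι (a 1) ∧
    x ∈ Set.range ι :=
  stmt_17_general ι hι x r res a hres hLaurent
end

section
/- Let H be a Hilbert space, D ⊆ H dense, and X₁, X₂ ∈ L†(D,H) with X₁ □ X₂ well-defined. Let B ∈ L†(D,H) be bounded with B(D) ⊆ D and B†(D) ⊆ D. Then X₁ □ (X₂ □ B) is well-defined and (X₁ □ X₂) □ B = X₁ □ (X₂ □ B) (semi-associativity with respect to bounded operators preserving D). -/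
/-! Being bounded on the dense domain `D`, `B` extends to a bounded operator on `H`, whose Hilbert
adjoint `A` satisfies `⟪B ξ, y⟫ = ⟪ξ, A y⟫` for every `y ∈ H`, not only for `y ∈ D`. This is what
lets `B` be moved across inner products with `X₂† η` and `Z† η`, which need not lie in `D`: the
adjoint of `X₂ □ B` is `A ∘ X₂†`, and `A (Z† η)` witnesses `X₁† η ∈ D((X₂ □ B)*)`. -/

open scoped InnerProductSpace

local notation "⟪" x ", " y "⟫" => @inner ℂ _ _ x y

section BoundedOnDense

variable {𝕜 H : Type*} [RCLike 𝕜] [NormedAddCommGroup H] [InnerProductSpace 𝕜 H]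
  {D : Submodule 𝕜 H}

theorem Submodule.exists_extension_of_bounded [CompleteSpace H] (hD : Dense (D : Set H))
    (B : D →ₗ[𝕜] H) (hB : ∃ C : ℝ, ∀ ξ : D, ‖B ξ‖ ≤ C * ‖(ξ : H)‖) :
    ∃ Bbar : H →L[𝕜] H, ∀ ξ : D, Bbar ξ = B ξ := by
  obtain ⟨C, hC⟩ := hB
  have hdense : DenseRange D.subtypeL := by
    simpa [DenseRange, Subtype.range_coe] using hD
  exact ⟨(B.mkContinuous C hC).extend D.subtypeL, fun ξ =>
    ContinuousLinearMap.extend_eq _ hdense isometry_subtype_coe.isUniformInducing ξ⟩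

theorem Submodule.exists_adjoint_of_bounded [CompleteSpace H] (hD : Dense (D : Set H))
    (B : D →ₗ[𝕜] H) (hB : ∃ C : ℝ, ∀ ξ : D, ‖B ξ‖ ≤ C * ‖(ξ : H)‖) :
    ∃ A : H →L[𝕜] H, ∀ (ξ : D) (y : H), ⟪B ξ, y⟫_𝕜 = ⟪(ξ : H), A y⟫_𝕜 := by
  obtain ⟨Bbar, hBbar⟩ := D.exists_extension_of_bounded hD B hB
  exact ⟨Bbar.adjoint, fun ξ y => by rw [← hBbar, ContinuousLinearMap.adjoint_inner_right]⟩

end BoundedOnDense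

theorem stmt_18_general {H : Type*} [NormedAddCommGroup H] [InnerProductSpace ℂ H] [CompleteSpace H]
    (D : Submodule ℂ H) (hD : Dense (D : Set H))
    (X₁d X₂ X₂d Z Zd : ↥D →ₗ[ℂ] H)
    (hX₂ : ∀ ξ η : D, ⟪X₂ ξ, (η : H)⟫ = ⟪(ξ : H), X₂d η⟫)
    (hZ : ∀ ξ η : D, ⟪Z ξ, (η : H)⟫ = ⟪(ξ : H), Zd η⟫)
    (hX₁X₂ : ∀ ξ η : D, ⟪X₂ ξ, X₁d η⟫ = ⟪Z ξ, (η : H)⟫)  -- Z = X₁ □ X₂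
    (B : ↥D →ₗ[ℂ] H)
    (hBbdd : ∃ C : ℝ, ∀ ξ : D, ‖B ξ‖ ≤ C * ‖(ξ : H)‖)
    (hBD : ∀ ξ : D, B ξ ∈ D) :
    ∃ W V : ↥D →ₗ[ℂ] H,
      -- `W = X₂ □ B : ξ ↦ X₂(Bξ)`
      (∀ ξ : D, W ξ = X₂ ⟨B ξ, hBD ξ⟩) ∧
      -- `W ∈ L†(D,H)`, with adjoint witness `V = W†`
      (∀ ξ η : D, ⟪W ξ, (η : H)⟫ = ⟪(ξ : H), V η⟫) ∧
      -- `X₁ □ W` is well-defined: `W(D) ⊆ D((X₁†)*)` with value `ξ ↦ Z(Bξ)` ...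
      (∀ ξ η : D, ⟪W ξ, X₁d η⟫ = ⟪Z ⟨B ξ, hBD ξ⟩, (η : H)⟫) ∧
      -- ... and `X₁†(D) ⊆ D(W*)`
      (∀ η : D, ∃ w : H, ∀ ξ : D, ⟪W ξ, X₁d η⟫ = ⟪(ξ : H), w⟫) := by
  obtain ⟨A, hA⟩ := D.exists_adjoint_of_bounded hD B hBbdd
  let BD : D →ₗ[ℂ] D := B.codRestrict D hBD
  refine ⟨X₂ ∘ₗ BD, A.toLinearMap ∘ₗ X₂d, fun ξ => rfl, fun ξ η => ?_, fun ξ η => hX₁X₂ (BD ξ) η,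
    fun η => ⟨A (Zd η), fun ξ => ?_⟩⟩
  · calc ⟪X₂ (BD ξ), (η : H)⟫ = ⟪(BD ξ : H), X₂d η⟫ := hX₂ _ _
      _ = ⟪(ξ : H), A (X₂d η)⟫ := hA ξ _
  · calc ⟪X₂ (BD ξ), X₁d η⟫ = ⟪Z (BD ξ), (η : H)⟫ := hX₁X₂ _ _
      _ = ⟪(BD ξ : H), Zd η⟫ := hZ _ _
      _ = ⟪(ξ : H), A (Zd η)⟫ := hA ξ _

/-- Semi-associativity with respect to bounded operators preserving `D`:
if `X₁ □ X₂` is well-defined (with value `Z ∈ L†(D,H)`) and `B` is bounded with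
`B(D) ⊆ D`, `B†(D) ⊆ D`, then `W = X₂ □ B` (given by `ξ ↦ X₂(Bξ)`) belongs to `L†(D,H)`,
`X₁ □ W` is well-defined, and its value is `(X₁ □ X₂) □ B : ξ ↦ Z(Bξ)`. -/
theorem stmt_18 {H : Type*} [NormedAddCommGroup H] [InnerProductSpace ℂ H] [CompleteSpace H]
    (D : Submodule ℂ H) (hD : Dense (D : Set H))
    (X₁ X₁d X₂ X₂d Z Zd : ↥D →ₗ[ℂ] H)
    (hX₁ : ∀ ξ η : D, ⟪X₁ ξ, (η : H)⟫ = ⟪(ξ : H), X₁d η⟫)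
    (hX₂ : ∀ ξ η : D, ⟪X₂ ξ, (η : H)⟫ = ⟪(ξ : H), X₂d η⟫)
    (hZ : ∀ ξ η : D, ⟪Z ξ, (η : H)⟫ = ⟪(ξ : H), Zd η⟫)
    (hX₁X₂ : ∀ ξ η : D, ⟪X₂ ξ, X₁d η⟫ = ⟪Z ξ, (η : H)⟫)  -- Z = X₁ □ X₂
    (B Bd : ↥D →ₗ[ℂ] H)
    (hBbdd : ∃ C : ℝ, ∀ ξ : D, ‖B ξ‖ ≤ C * ‖(ξ : H)‖)
    (hBD : ∀ ξ : D, B ξ ∈ D)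
    (hBdD : ∀ ξ : D, Bd ξ ∈ D)
    (hB : ∀ ξ η : D, ⟪B ξ, (η : H)⟫ = ⟪(ξ : H), Bd η⟫) :
    ∃ W V : ↥D →ₗ[ℂ] H,
      -- `W = X₂ □ B : ξ ↦ X₂(Bξ)`
      (∀ ξ : D, W ξ = X₂ ⟨B ξ, hBD ξ⟩) ∧
      -- `W ∈ L†(D,H)`, with adjoint witness `V = W†`
      (∀ ξ η : D, ⟪W ξ, (η : H)⟫ = ⟪(ξ : H), V η⟫) ∧
      -- `X₁ □ W` is well-defined: `W(D) ⊆ D((X₁†)*)` with value `ξ ↦ Z(Bξ)` ...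
      (∀ ξ η : D, ⟪W ξ, X₁d η⟫ = ⟪Z ⟨B ξ, hBD ξ⟩, (η : H)⟫) ∧
      -- ... and `X₁†(D) ⊆ D(W*)`
      (∀ η : D, ∃ w : H, ∀ ξ : D, ⟪W ξ, X₁d η⟫ = ⟪(ξ : H), w⟫) :=
  stmt_18_general D hD X₁d X₂ X₂d Z Zd hX₂ hZ hX₁X₂ B hBbdd hBD
end
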